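/- If Ĝ is a region intersection graph over G and Ĝ has a careful H-minor, then G has an H-minor. -/

import Mathlib

/-!
Regions pull back along a strict minor: the region of a branch set is the union of the regions
of its vertices. So `G` carries connected regions for the vertices of the subdivision `Ḣ`,
meeting exactly along the edges of `Ḣ`. The branch set of `u` in `G` is its own region together
with, for each edge `e = uv` oriented away from `u`, the stretch of `e`'s region that a path
from the region of `u` covers before it first enters the region of `v`. Regions of non-adjacent
vertices of `Ḣ` are disjoint, hence so are these branch sets.
-/

noncomputable section

/-- `H` is a minor of `G`, witnessed by pairwise-disjoint connected branch sets. -/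
def IsMinor {V U : Type*} (G : SimpleGraph V) (H : SimpleGraph U) : Prop :=
  ∃ A : U → Set V, (∀ u : U, (G.induce (A u)).Connected) ∧
    Pairwise (Function.onFun Disjoint A) ∧
    ∀ u v : U, H.Adj u v → ∃ a ∈ A u, ∃ b ∈ A v, G.Adj a b

/-- `H` is a strict minor of `G`: branch sets with edges between `A u` and `A v`
*exactly* when `{u,v}` is an edge of `H`. -/
def IsStrictMinor {V U : Type*} (G : SimpleGraph V) (H : SimpleGraph U) : Prop :=
  ∃ A : U → Set V, (∀ u : U, (G.induce (A u)).Connected) ∧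
    Pairwise (Function.onFun Disjoint A) ∧
    ∀ u v : U, u ≠ v → (H.Adj u v ↔ ∃ a ∈ A u, ∃ b ∈ A v, G.Adj a b)

/-- The subdivision `Ḣ` of `H`: every edge is replaced by a path of length two
through a new vertex. -/
def subdiv {U : Type*} (H : SimpleGraph U) : SimpleGraph (U ⊕ H.edgeSet) where
  Adj a b :=
    match a, b with
    | Sum.inl u, Sum.inr e => u ∈ (e : Sym2 U)
    | Sum.inr e, Sum.inl u => u ∈ (e : Sym2 U)
    | _, _ => False
  symm := ⟨by rintro (u | e) (v | f) h <;> simp_all⟩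
  loopless := ⟨by rintro (u | e) h <;> simp_all⟩

/-- `H` is a careful minor of `G` if the subdivision of `H` is a strict minor of `G`. -/
def IsCarefulMinor {V U : Type*} (G : SimpleGraph V) (H : SimpleGraph U) : Prop :=
  IsStrictMinor G (subdiv H)

/-- `Ĝ` is a region intersection graph over `G`. -/
def IsRig {W V : Type*} (Ghat : SimpleGraph W) (G : SimpleGraph V) : Prop :=
  ∃ R : W → Set V, (∀ u : W, (G.induce (R u)).Connected) ∧
    ∀ u v : W, u ≠ v → (Ghat.Adj u v ↔ (R u ∩ R v).Nonempty)

namespace SimpleGraph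

variable {V : Type*} {G : SimpleGraph V}

lemma connected_induce_iUnion {W : Type*} {K : SimpleGraph W} {R : W → Set V}
    (hK : K.Connected) (hR : ∀ w, (G.induce (R w)).Connected)
    (hRK : ∀ w w', K.Adj w w' → (R w ∩ R w').Nonempty) :
    (G.induce (⋃ w, R w)).Connected := by
  have reach_within : ∀ w x y (hx : x ∈ R w) (hy : y ∈ R w),
      (G.induce (⋃ w, R w)).Reachable ⟨x, Set.mem_iUnion_of_mem w hx⟩
        ⟨y, Set.mem_iUnion_of_mem w hy⟩ := fun w x y hx hy =>
    ((hR w).preconnected ⟨x, hx⟩ ⟨y, hy⟩).map (G.induceHomOfLE (Set.subset_iUnion R w)).toHom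
  obtain ⟨w₀⟩ := hK.nonempty
  obtain ⟨⟨x₀, hx₀⟩⟩ := (hR w₀).nonempty
  have reach_all : ∀ w x (hx : x ∈ R w),
      (G.induce (⋃ w, R w)).Reachable ⟨x₀, Set.mem_iUnion_of_mem w₀ hx₀⟩
        ⟨x, Set.mem_iUnion_of_mem w hx⟩ := by
    intro w
    induction (reachable_iff_reflTransGen w₀ w).1 (hK.preconnected w₀ w) with
    | refl => exact fun x hx => reach_within w₀ x₀ x hx₀ hx
    | tail _ hadj ih =>
      intro x hx
      obtain ⟨z, hz, hz'⟩ := hRK _ _ hadj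
      exact (ih z hz).trans (reach_within _ z x hz' hx)
  rw [connected_iff_exists_forall_reachable]
  refine ⟨⟨x₀, Set.mem_iUnion_of_mem w₀ hx₀⟩, fun ⟨x, hx⟩ => ?_⟩
  obtain ⟨w, hxw⟩ := Set.mem_iUnion.1 hx
  exact reach_all w x hxw

lemma connected_induce_union_iUnion {ι : Type*} {X : Set V} {P : ι → Set V}
    (hX : (G.induce X).Connected) (hP : ∀ i, (G.induce (X ∪ P i)).Connected) :
    (G.induce (X ∪ ⋃ i, P i)).Connected := by
  obtain ⟨⟨x₀, hx₀⟩⟩ := hX.nonempty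
  refine G.induce_connected_of_patches x₀ (Or.inl hx₀) fun {v} hv => ?_
  rcases hv with hv | hv
  · exact ⟨X, Set.subset_union_left, hx₀, hv, hX.preconnected _ _⟩
  · obtain ⟨i, hvi⟩ := Set.mem_iUnion.1 hv
    exact ⟨X ∪ P i, Set.union_subset_union_right X (Set.subset_iUnion P i), Or.inl hx₀,
      Or.inr hvi, (hP i).preconnected _ _⟩

lemma Walk.exists_subset_support_connected_union_adj {X Y : Set V} {a b : V} (p : G.Walk a b)
    (hX : (G.induce X).Connected) (ha : a ∈ X) (hb : b ∈ Y) (hXY : Disjoint X Y) :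
    ∃ P ⊆ {v | v ∈ p.support}, Disjoint P Y ∧ (G.induce (X ∪ P)).Connected ∧
      ∃ x ∈ X ∪ P, ∃ y ∈ Y, G.Adj x y := by
  induction p generalizing X with
  | nil => exact absurd hb (Set.disjoint_left.1 hXY ha)
  | @cons a c b hac q ih =>
    by_cases hcY : c ∈ Y
    · exact ⟨∅, Set.empty_subset _, Set.empty_disjoint _, by rwa [Set.union_empty],
        a, Or.inl ha, c, hcY, hac⟩
    have hXc : (G.induce (X ∪ {c})).Connected :=
      connected_induce_union hX.preconnected Preconnected.of_subsingleton ha rfl hac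
    obtain ⟨P, hPq, hPY, hXP⟩ :=
      ih hXc (Or.inr rfl) hb (Set.disjoint_union_left.2 ⟨hXY, Set.disjoint_singleton_left.2 hcY⟩)
    have hunion : X ∪ {c} ∪ P = X ∪ insert c P := by
      rw [Set.union_insert, ← Set.union_singleton, Set.union_right_comm]
    refine ⟨insert c P, ?_, Set.disjoint_insert_left.2 ⟨hcY, hPY⟩, hunion ▸ hXP⟩
    rintro v (rfl | hv)
    · exact List.mem_cons_of_mem _ q.start_mem_support
    · exact List.mem_cons_of_mem _ (hPq hv)

lemma exists_subset_connected_union_adj {X Y Z : Set V} (hX : (G.induce X).Connected)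
    (hZ : (G.induce Z).Connected) (hXZ : (X ∩ Z).Nonempty) (hYZ : (Y ∩ Z).Nonempty)
    (hXY : Disjoint X Y) :
    ∃ P ⊆ Z, Disjoint P Y ∧ (G.induce (X ∪ P)).Connected ∧ ∃ x ∈ X ∪ P, ∃ y ∈ Y, G.Adj x y := by
  obtain ⟨a, haX, haZ⟩ := hXZ
  obtain ⟨b, hbY, hbZ⟩ := hYZ
  obtain ⟨q⟩ := hZ.preconnected ⟨a, haZ⟩ ⟨b, hbZ⟩
  obtain ⟨P, hPq, hP⟩ :=
    (q.map (Embedding.induce Z).toHom).exists_subset_support_connected_union_adj hX haX hbY hXY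
  refine ⟨P, fun v hv => ?_, hP⟩
  obtain ⟨⟨v, hvZ⟩, -, rfl⟩ := List.mem_map.1 (Walk.support_map _ q ▸ hPq hv)
  exact hvZ

end SimpleGraph

open SimpleGraph

section Rig

variable {V W U : Type*} {G : SimpleGraph V}

theorem IsRig.of_isStrictMinor {Ghat : SimpleGraph W} {K : SimpleGraph U} (hrig : IsRig Ghat G)
    (hK : IsStrictMinor Ghat K) : IsRig K G := by
  obtain ⟨R, hRconn, hR⟩ := hrig
  obtain ⟨A, hAconn, hAdisj, hA⟩ := hK
  refine ⟨fun a => ⋃ w ∈ A a, R w, fun a => ?_, fun a b hab => ?_⟩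
  · show (G.induce (⋃ w ∈ A a, R w)).Connected
    rw [Set.biUnion_eq_iUnion]
    exact connected_induce_iUnion (hAconn a) (hRconn ·)
      fun _ _ h => (hR _ _ (induce_adj.1 h).ne).1 (induce_adj.1 h)
  rw [hA a b hab]
  constructor
  · rintro ⟨w, hw, w', hw', hadj⟩
    obtain ⟨x, hx, hx'⟩ := (hR w w' hadj.ne).1 hadj
    exact ⟨x, Set.mem_biUnion hw hx, Set.mem_biUnion hw' hx'⟩
  · rintro ⟨x, hx, hx'⟩
    obtain ⟨w, hw, hxw⟩ := Set.mem_iUnion₂.1 hx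
    obtain ⟨w', hw', hxw'⟩ := Set.mem_iUnion₂.1 hx'
    have hww' : w ≠ w' := fun h => Set.disjoint_left.1 (hAdisj hab) hw (h ▸ hw')
    exact ⟨w, hw, w', hw', (hR w w' hww').2 ⟨x, hxw, hxw'⟩⟩

end Rig

section Subdivision

variable {V U : Type*} {G : SimpleGraph V} {H : SimpleGraph U}

@[simp]
lemma subdiv_adj_inl_inr {u : U} {e : H.edgeSet} :
    (subdiv H).Adj (Sum.inl u) (Sum.inr e) ↔ u ∈ (e : Sym2 U) := Iff.rfl

@[simp]
lemma subdiv_adj_inr_inl {u : U} {e : H.edgeSet} :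
    (subdiv H).Adj (Sum.inr e) (Sum.inl u) ↔ u ∈ (e : Sym2 U) := Iff.rfl

@[simp]
lemma not_subdiv_adj_inl_inl {u v : U} : ¬(subdiv H).Adj (Sum.inl u) (Sum.inl v) := id

@[simp]
lemma not_subdiv_adj_inr_inr {e f : H.edgeSet} : ¬(subdiv H).Adj (Sum.inr e) (Sum.inr f) := id

theorem IsRig.isMinor_of_subdiv (h : IsRig (subdiv H) G) : IsMinor G H := by
  obtain ⟨Q, hQconn, hQ⟩ := h
  have disjoint_of_not_adj : ∀ a b, a ≠ b → ¬(subdiv H).Adj a b → Disjoint (Q a) (Q b) :=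
    fun a b hab hnadj => Set.disjoint_iff_inter_eq_empty.2 <|
      Set.not_nonempty_iff_eq_empty.1 (mt (hQ a b hab).2 hnadj)
  choose s t hst using fun e : H.edgeSet =>
    Sym2.ind (f := fun z => ∃ u v, z = s(u, v)) (fun u v => ⟨u, v, rfl⟩) (e : Sym2 U)
  have hst_adj : ∀ e, H.Adj (s e) (t e) := fun e => by
    rw [← mem_edgeSet, ← hst e]; exact e.2
  choose P hPe hPt hconn hadj using fun e =>
    exists_subset_connected_union_adj (hQconn (.inl (s e))) (hQconn (.inr e))
      ((hQ (.inl (s e)) (.inr e) Sum.inl_ne_inr).1 (by simp [hst e]))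
      ((hQ (.inl (t e)) (.inr e) Sum.inl_ne_inr).1 (by simp [hst e]))
      (disjoint_of_not_adj _ _ (by simpa using (hst_adj e).ne) not_subdiv_adj_inl_inl)
  have hP_disjoint : ∀ e w, w ≠ s e → Disjoint (P e) (Q (.inl w)) := by
    intro e w hw
    by_cases hwt : w = t e
    · exact hwt ▸ hPt e
    refine (disjoint_of_not_adj _ _ Sum.inr_ne_inl ?_).mono_left (hPe e)
    simp [hst e, hw, hwt]
  refine ⟨fun u => Q (.inl u) ∪ ⋃ e : {e // s e = u}, P e, fun u => ?_, fun u u' huu' => ?_,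
    fun u v huv => ?_⟩
  · exact connected_induce_union_iUnion (hQconn _) fun ⟨e, he⟩ => he ▸ hconn e
  · simp only [Function.onFun, Set.disjoint_union_left, Set.disjoint_union_right,
      Set.disjoint_iUnion_left, Set.disjoint_iUnion_right]
    refine ⟨⟨disjoint_of_not_adj _ _ (by simpa using huu') not_subdiv_adj_inl_inl,
      fun ⟨e, he⟩ => hP_disjoint e u' (by rw [he]; exact huu'.symm)⟩,
      fun ⟨f, hf⟩ => ⟨(hP_disjoint f u (by rw [hf]; exact huu')).symm, fun ⟨e, he⟩ => ?_⟩⟩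
    have hef : e ≠ f := fun h => huu' (by rw [← he, ← hf, h])
    exact (disjoint_of_not_adj _ _ (by simpa using hef) not_subdiv_adj_inr_inr).mono
      (hPe _) (hPe _)
  · have subset_branch :
        ∀ e, Q (.inl (s e)) ∪ P e ⊆ Q (.inl (s e)) ∪ ⋃ e' : {e' // s e' = s e}, P e' :=
      fun e => Set.union_subset_union_right _ (Set.subset_iUnion_of_subset ⟨e, rfl⟩ le_rfl)
    let e : H.edgeSet := ⟨s(u, v), huv⟩
    obtain ⟨x, hx, y, hy, hxy⟩ := hadj e
    rcases Sym2.eq_iff.1 (hst e) with ⟨hu, hv⟩ | ⟨hu, hv⟩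
    · exact ⟨x, hu ▸ subset_branch e hx, y, Or.inl (hv ▸ hy), hxy⟩
    · exact ⟨y, Or.inl (hu ▸ hy), x, hv ▸ subset_branch e hx, hxy.symm⟩

end Subdivision

theorem stmt13 {V W U : Type*} (G : SimpleGraph V) (Ghat : SimpleGraph W)
    (H : SimpleGraph U) (hrig : IsRig Ghat G) (hmin : IsCarefulMinor Ghat H) :
    IsMinor G H :=
  (hrig.of_isStrictMinor hmin).isMinor_of_subdiv

end
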